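/- arXiv:1911.09477 — 3 statements merged into one kernel-verified Lean document; each statement's English description precedes it below -/
import Mathlib

section
/- For all n, m : ℕ, the m-fold iterated derived set of T_{n+m} equals T_n; that is, L^m(T_{n+m}) = T_n. -/
/-- The toy spread `T_n`. -/
def toy (n : ℕ) : Set (ℕ → ℕ) :=
  {α | ∀ i : ℕ, α i ≤ α (i + 1) ∧ α i < n}

/-- The derived set (set of limit/accumulation points) of `F` in Baire space. -/
def dSet (F : Set (ℕ → ℕ)) : Set (ℕ → ℕ) :=
  {α | ∀ U ∈ nhds α, ∃ β ∈ F, β ∈ U ∧ β ≠ α}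

lemma nbhd_mem (α : ℕ → ℕ) (k : ℕ) :
    {β : ℕ → ℕ | ∀ j < k, β j = α j} ∈ nhds α := by
  have h : {β : ℕ → ℕ | ∀ j < k, β j = α j}
      = Set.pi (↑(Finset.range k)) (fun j => {α j}) := by
    ext β; simp [Set.mem_pi]
  rw [h]
  apply set_pi_mem_nhds (Finset.range k).finite_toSet
  intro j _
  simp [mem_nhds_discrete]

lemma dSet_toy (n : ℕ) : dSet (toy (n + 1)) = toy n := by
  ext α
  constructor
  · intro h
    have key : ∀ i, α i ≤ α (i + 1) ∧ α i ≤ n := by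
      intro i
      obtain ⟨β, hβ, hβU, -⟩ := h _ (nbhd_mem α (i + 2))
      have h1 := hβU i (by omega)
      have h2 := hβU (i + 1) (by omega)
      have h3 := hβ i
      constructor
      · omega
      · omega
    have hmono : Monotone α := monotone_nat_of_le_succ (fun i => (key i).1)
    intro i
    refine ⟨(key i).1, ?_⟩
    by_contra hlt
    push_neg at hlt
    have hin : α i = n := le_antisymm (key i).2 hlt
    obtain ⟨β, hβ, hβU, hne⟩ := h _ (nbhd_mem α (i + 1))
    apply hne
    have hβmono : Monotone β := monotone_nat_of_le_succ (fun j => (hβ j).1)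
    funext j
    rcases lt_or_ge j (i + 1) with hj | hj
    · exact hβU j hj
    · have hji : i ≤ j := by omega
      have h1 : β i ≤ β j := hβmono hji
      have h2 : β j ≤ n := by have := (hβ j).2; omega
      have h3 : β i = n := by rw [hβU i (by omega), hin]
      have h4 : α j = n := le_antisymm (key j).2 (hin ▸ hmono hji)
      omega
  · intro hα U hU
    set seq : ℕ → (ℕ → ℕ) := fun k i => if i < k then α i else n with hseq
    have htend : Filter.Tendsto seq Filter.atTop (nhds α) := by
      rw [tendsto_pi_nhds]
      intro i
      apply Filter.Tendsto.congr' (f₁ := fun _ => α i)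
      · filter_upwards [Filter.eventually_ge_atTop (i + 1)] with k hk
        simp [hseq, Nat.lt_of_lt_of_le (Nat.lt_succ_self i) hk]
      · exact tendsto_const_nhds
    obtain ⟨k, hk⟩ := (htend.eventually_mem hU).exists
    refine ⟨seq k, ?_, hk, ?_⟩
    · intro i
      have hαi := hα i
      have hαi1 := hα (i + 1)
      constructor
      · simp only [hseq]
        split <;> split <;> omega
      · simp only [hseq]
        split <;> omega
    · intro hcontra
      have : seq k k = α k := congrFun hcontra k
      simp [hseq] at this
      have := (hα k).2
      omega

theorem iterated_dSet_toy (n m : ℕ) : dSet^[m] (toy (n + m)) = toy n := by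
  induction m generalizing n with
  | zero => simp
  | succ m ih =>
    rw [Function.iterate_succ_apply']
    have h : n + (m + 1) = (n + 1) + m := by omega
    rw [h, ih (n + 1), dSet_toy]
end

section
/- For all m, n : ℕ with m < n, there exists a continuous bijection from the disjoint sum T_m ⊎ T_n onto T_n (both regarded as subspaces of Baire space). -/
/-- `⟨i⟩∗X`: the set of sequences beginning with `i` whose tail lies in `X`. -/
def consSet (i : ℕ) (X : Set (ℕ → ℕ)) : Set (ℕ → ℕ) :=
  {β | β 0 = i ∧ (fun k => β (k + 1)) ∈ X}

/-- The disjoint sum `F ⊎ G` of two subsets of Baire space. -/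
def disjSum (F G : Set (ℕ → ℕ)) : Set (ℕ → ℕ) :=
  consSet 0 F ∪ consSet 1 G

/-- The underlying map for the continuous bijection. -/
def toyFmap (d : ℕ) (β : ℕ → ℕ) : ℕ → ℕ := fun i =>
  if β 0 = 0 then β (i + 1) + d
  else if β 1 + 1 < d then β (i + 1)
  else if i = 0 then d - 1 else β i

lemma toy_mono {n : ℕ} {α : ℕ → ℕ} (h : α ∈ toy n) : ∀ k, α 0 ≤ α k := by
  intro k
  induction k with
  | zero => exact le_refl _
  | succ k ih => exact le_trans ih (h k).1

lemma toyFmap_cont (d : ℕ) : Continuous (toyFmap d) := by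
  apply continuous_pi
  intro i
  have h : (fun β => toyFmap d β i) =
      (fun p : ℕ × ℕ × ℕ × ℕ =>
        if p.1 = 0 then p.2.2.1 + d
        else if p.2.1 + 1 < d then p.2.2.1
        else if i = 0 then d - 1 else p.2.2.2) ∘
      (fun β : ℕ → ℕ => (β 0, β 1, β (i + 1), β i)) := rfl
  rw [h]
  exact continuous_of_discreteTopology.comp
    ((continuous_apply 0).prodMk ((continuous_apply 1).prodMk
      ((continuous_apply (i + 1)).prodMk (continuous_apply i))))

theorem toy_disjSum_equiv (m n : ℕ) (hmn : m < n) :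
    ∃ f : (disjSum (toy m) (toy n)) → (toy n),
      Continuous f ∧ Function.Bijective f := by
  set d := n - m with hd
  have hd1 : 1 ≤ d := by omega
  have hdn : d ≤ n := by omega
  -- well-definedness
  have key : ∀ β ∈ disjSum (toy m) (toy n), toyFmap d β ∈ toy n := by
    rintro β (⟨h0, hm⟩ | ⟨h1, hn⟩)
    · intro i
      have hmi := hm i
      have hmi1 := hm (i + 1)
      simp only [toy, Set.mem_setOf_eq] at hmi hmi1 ⊢
      simp [toyFmap, h0]
      omega
    · intro i
      have hb0 : ¬ β 0 = 0 := by omega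
      have hni := hn i
      have hni1 := hn (i + 1)
      have hn0 := hn 0
      simp only [toy, Set.mem_setOf_eq] at hni hni1 hn0 ⊢
      clear hni hni1 hn0
      rcases i with _ | i
      · have a1 : β 1 ≤ β 2 ∧ β 1 < n := hn 0
        have a2 : β 2 ≤ β 3 ∧ β 2 < n := hn 1
        simp [toyFmap, hb0]
        split_ifs <;> omega
      · have a1 : β (i + 1) ≤ β (i + 1 + 1) ∧ β (i + 1) < n := hn i
        have a2 : β (i + 1 + 1) ≤ β (i + 1 + 1 + 1) ∧ β (i + 1 + 1) < n := hn (i + 1)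
        have a3 : β 1 ≤ β 2 ∧ β 1 < n := hn 0
        simp [toyFmap, hb0]
        split_ifs <;> omega
  refine ⟨fun x => ⟨toyFmap d x.val, key x.val x.2⟩, ?_, ?_, ?_⟩
  · exact Continuous.subtype_mk ((toyFmap_cont d).comp continuous_subtype_val) _
  · -- injective
    rintro ⟨α, ha⟩ ⟨γ, hb⟩ hab
    have h : toyFmap d α = toyFmap d γ := congrArg Subtype.val hab
    apply Subtype.ext
    show α = γ
    have hEv : ∀ k, toyFmap d α k = toyFmap d γ k := fun k => congrFun h k
    rcases ha with ⟨h0a, hma⟩ | ⟨h1a, hna⟩ <;> rcases hb with ⟨h0b, hmb⟩ | ⟨h1b, hnb⟩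
    · funext i
      rcases i with _ | i
      · rw [h0a, h0b]
      · have := hEv i
        simp [toyFmap, h0a, h0b] at this
        omega
    · exfalso
      have hb0 : ¬ γ 0 = 0 := by omega
      have := hEv 0
      simp [toyFmap, h0a, hb0] at this
      split_ifs at this <;> omega
    · exfalso
      have hb0 : ¬ α 0 = 0 := by omega
      have := hEv 0
      simp [toyFmap, h0b, hb0] at this
      split_ifs at this <;> omega
    · have ha0 : ¬ α 0 = 0 := by omega
      have hb0 : ¬ γ 0 = 0 := by omega
      by_cases hca : α 1 + 1 < d <;> by_cases hcb : γ 1 + 1 < d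
      · funext i
        rcases i with _ | i
        · rw [h1a, h1b]
        · have := hEv i
          simp [toyFmap, ha0, hb0, hca, hcb] at this
          exact this
      · exfalso
        have := hEv 0
        simp [toyFmap, ha0, hb0, hca, hcb] at this
        omega
      · exfalso
        have := hEv 0
        simp [toyFmap, ha0, hb0, hca, hcb] at this
        omega
      · funext i
        rcases i with _ | i
        · rw [h1a, h1b]
        · have := hEv (i + 1)
          simp [toyFmap, ha0, hb0, hca, hcb] at this
          exact this
  · -- surjective
    rintro ⟨γ, hγ⟩
    have hγ' := hγ
    simp only [toy, Set.mem_setOf_eq] at hγ'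
    have hmono := toy_mono hγ
    by_cases hc1 : d ≤ γ 0
    · -- preimage 0 :: (γ - d)
      refine ⟨⟨fun i => if i = 0 then 0 else γ (i - 1) - d, ?_⟩, ?_⟩
      · left
        refine ⟨by simp, ?_⟩
        intro i
        have h1 := hγ' i
        have h2 := hmono i
        have h3 := hmono (i + 1)
        simp only [Set.mem_setOf_eq]
        simp
        omega
      · apply Subtype.ext
        funext i
        show toyFmap d (fun i => if i = 0 then 0 else γ (i - 1) - d) i = γ i
        have h2 := hmono i
        have h3 := hγ' i
        rcases i with _ | i <;> simp [toyFmap] <;> omega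
    · by_cases hc2 : γ 0 + 1 < d
      · -- preimage 1 :: γ
        refine ⟨⟨fun i => if i = 0 then 1 else γ (i - 1), ?_⟩, ?_⟩
        · right
          refine ⟨by simp, ?_⟩
          intro i
          simp only [Set.mem_setOf_eq]
          simp
          exact hγ' i
        · apply Subtype.ext
          funext i
          show toyFmap d (fun i => if i = 0 then 1 else γ (i - 1)) i = γ i
          have h0 : γ 0 ≤ γ 1 ∧ γ 0 < n := hγ' 0
          rcases i with _ | i <;> simp [toyFmap] <;> omega
      · -- γ 0 = d - 1; preimage 1 :: tail γ
        refine ⟨⟨fun i => if i = 0 then 1 else γ i, ?_⟩, ?_⟩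
        · right
          refine ⟨by simp, ?_⟩
          intro i
          simp only [Set.mem_setOf_eq]
          simp
          exact hγ' (i + 1)
        · apply Subtype.ext
          funext i
          show toyFmap d (fun i => if i = 0 then 1 else γ i) i = γ i
          have h0 : γ 0 ≤ γ 1 ∧ γ 0 < n := hγ' 0
          rcases i with _ | i
          · simp [toyFmap]
            split_ifs <;> omega
          · have h1 : γ (i + 1) ≤ γ (i + 1 + 1) ∧ γ (i + 1) < n := hγ' (i + 1)
            simp [toyFmap]
            omega
end

section
/- For all m, p, q ≥ 1: the p-fold iterated derived set L^p(ω ⊗ T_m) contains at least q pairwise distinct points if and only if p < m. -/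
/-- `ω ⊗ T_m`. -/
def omegaOtimes (m : ℕ) : Set (ℕ → ℕ) :=
  ⋃ i : ℕ, consSet i (toy m)

lemma mem_dSet_iff {F : Set (ℕ → ℕ)} {α : ℕ → ℕ} :
    α ∈ dSet F ↔ ∀ N : ℕ, ∃ β ∈ F, (∀ i, i < N → β i = α i) ∧ β ≠ α := by
  constructor
  · intro h N
    obtain ⟨β, hβF, hβU, hβne⟩ := h (PiNat.cylinder α N)
      ((PiNat.isOpen_cylinder _ α N).mem_nhds (PiNat.self_mem_cylinder α N))
    exact ⟨β, hβF, fun i hi => hβU i hi, hβne⟩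
  · intro h U hU
    obtain ⟨v, ⟨x, N, rfl⟩, hxv, hvU⟩ :=
      (PiNat.isTopologicalBasis_cylinders _).mem_nhds_iff.1 hU
    obtain ⟨β, hβF, hagree, hne⟩ := h N
    refine ⟨β, hβF, hvU (fun i hi => ?_), hne⟩
    rw [hagree i hi]; exact hxv i hi

lemma mono_bdd_eventually_const (n : ℕ) :
    ∀ f : ℕ → ℕ, Monotone f → (∀ i, f i < n) → ∃ N, ∀ k, N ≤ k → f k = f N := by
  induction n with
  | zero => intro f _ hb; exact absurd (hb 0) (Nat.not_lt_zero _)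
  | succ n ih =>
    intro f hm hb
    by_cases h : ∀ i, f i < n
    · exact ih f hm h
    · push_neg at h
      obtain ⟨k0, hk0⟩ := h
      refine ⟨k0, fun k hk => ?_⟩
      have h1 := hm hk
      have h2 := hb k
      omega

lemma omegaOtimes_zero : omegaOtimes 0 = ∅ := by
  ext α
  simp only [omegaOtimes, consSet, toy, Set.mem_iUnion, Set.mem_setOf_eq, Set.mem_empty_iff_false,
    iff_false, not_exists]
  intro i hi
  exact absurd (hi.2 0).2 (Nat.not_lt_zero _)

lemma dSet_omegaOtimes (n : ℕ) : dSet (omegaOtimes n) = omegaOtimes (n - 1) := by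
  rcases Nat.eq_zero_or_pos n with rfl | hn
  · rw [omegaOtimes_zero]
    ext α
    simp only [mem_dSet_iff, Set.mem_empty_iff_false, iff_false, not_forall]
    exact ⟨0, by simp⟩
  ext α
  rw [mem_dSet_iff]
  constructor
  · intro h
    -- α itself satisfies the tail conditions for toy n
    have htail : ∀ i : ℕ, α (i + 1) ≤ α (i + 2) ∧ α (i + 1) < n := by
      intro i
      obtain ⟨β, hβF, hagree, -⟩ := h (i + 3)
      simp only [omegaOtimes, Set.mem_iUnion, consSet, toy, Set.mem_setOf_eq] at hβF
      obtain ⟨j, -, hβ⟩ := hβF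
      have e1 := hagree (i + 1) (by omega)
      have e2 := hagree (i + 2) (by omega)
      have hb1 : β (i + 1) ≤ β (i + 2) := (hβ i).1
      have hb2 : β (i + 1) < n := (hβ i).2
      constructor <;> omega
    -- the tail is monotone and bounded, hence eventually constant
    have hmono : Monotone (fun k => α (k + 1)) :=
      monotone_nat_of_le_succ (fun k => (htail k).1)
    obtain ⟨N₀, hN₀⟩ := mono_bdd_eventually_const n _ hmono (fun i => (htail i).2)
    set v := α (N₀ + 1) with hv
    have hvlt : v < n := (htail N₀).2
    rcases Nat.lt_or_ge v (n - 1) with hvsmall | hvbig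
    · -- eventual value < n - 1 : all tail values < n - 1
      have hbd : ∀ i : ℕ, α (i + 1) < n - 1 := by
        intro i
        rcases Nat.le_total i N₀ with hi | hi
        · have h5 : α (i + 1) ≤ α (N₀ + 1) := hmono hi
          omega
        · have h6 : α (i + 1) = α (N₀ + 1) := hN₀ i hi
          omega
      refine Set.mem_iUnion.2 ⟨α 0, rfl, fun i => ⟨(htail i).1, hbd i⟩⟩
    · -- eventual value = n - 1 : α would be isolated, contradiction
      exfalso
      obtain ⟨β, hβF, hagree, hne⟩ := h (N₀ + 2)
      simp only [omegaOtimes, Set.mem_iUnion, consSet, toy, Set.mem_setOf_eq] at hβF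
      obtain ⟨j, -, hβ⟩ := hβF
      apply hne
      have hβmono : Monotone (fun k => β (k + 1)) :=
        monotone_nat_of_le_succ (fun k => (hβ k).1)
      have hkey : ∀ k, N₀ + 1 ≤ k → β k = n - 1 := by
        intro k hk
        have h1 : β (N₀ + 1) = α (N₀ + 1) := hagree (N₀ + 1) (by omega)
        have h2 : β (N₀ + 1) ≤ β k := by
          obtain ⟨d, rfl⟩ := Nat.exists_eq_add_of_le hk
          have h : β (N₀ + 1) ≤ β (N₀ + d + 1) := hβmono (Nat.le_add_right N₀ d)
          have he : N₀ + d + 1 = N₀ + 1 + d := by omega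
          rwa [he] at h
        have h3 : β k < n := by
          obtain ⟨d, rfl⟩ : ∃ d, k = d + 1 := ⟨k - 1, by omega⟩
          exact (hβ d).2
        omega
      have hαkey : ∀ k, N₀ + 1 ≤ k → α k = n - 1 := by
        intro k hk
        have h7 : α k = v := by
          have h8 : α (k - 1 + 1) = α (N₀ + 1) := hN₀ (k - 1) (by omega)
          have hk1 : k - 1 + 1 = k := by omega
          rwa [hk1] at h8
        omega
      funext k
      rcases Nat.lt_or_ge k (N₀ + 2) with hk | hk
      · exact hagree k hk
      · rw [hkey k (by omega), hαkey k (by omega)]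
  · intro hα N
    simp only [omegaOtimes, Set.mem_iUnion, consSet, toy, Set.mem_setOf_eq] at hα
    obtain ⟨j, hj0, hjt⟩ := hα
    set β : ℕ → ℕ := fun k => if k ≤ N then α k else n - 1 with hβdef
    have hβmem : β ∈ omegaOtimes n := by
      refine Set.mem_iUnion.2 ⟨j, ?_, ?_⟩
      · show (if 0 ≤ N then α 0 else n - 1) = j
        rw [if_pos (Nat.zero_le N)]; exact hj0
      · intro k
        have h1 : α (k + 1) ≤ α (k + 2) := (hjt k).1
        have h2 : α (k + 1) < n - 1 := (hjt k).2
        have h3 : α (k + 2) < n - 1 := (hjt (k + 1)).2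
        show (if k + 1 ≤ N then α (k + 1) else n - 1) ≤
            (if k + 2 ≤ N then α (k + 2) else n - 1) ∧
            (if k + 1 ≤ N then α (k + 1) else n - 1) < n
        split_ifs <;> omega
    refine ⟨β, hβmem, fun i hi => if_pos hi.le, fun hcontra => ?_⟩
    have h4 : β (N + 1) = α (N + 1) := congrFun hcontra (N + 1)
    have h5 : β (N + 1) = n - 1 := if_neg (by omega)
    have h6 : α (N + 1) < n - 1 := (hjt N).2
    omega

lemma iterate_dSet_omegaOtimes (m p : ℕ) :
    dSet^[p] (omegaOtimes m) = omegaOtimes (m - p) := by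
  induction p with
  | zero => simp
  | succ p ih =>
    rw [Function.iterate_succ_apply', ih, dSet_omegaOtimes]
    congr 1

theorem iterated_dSet_omegaOtimes_atLeast (m p q : ℕ)
    (hm : 1 ≤ m) (hp : 1 ≤ p) (hq : 1 ≤ q) :
    (∃ f : Fin q → (ℕ → ℕ), Function.Injective f ∧ ∀ i, f i ∈ dSet^[p] (omegaOtimes m)) ↔
      p < m := by
  rw [iterate_dSet_omegaOtimes]
  constructor
  · rintro ⟨f, -, hf⟩
    by_contra hpm
    have : m - p = 0 := by omega
    have h0 := hf ⟨0, hq⟩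
    rw [show m - p = 0 by omega, omegaOtimes_zero] at h0
    exact h0
  · intro hpm
    refine ⟨fun j => fun k => if k = 0 then (j : ℕ) else 0, ?_, ?_⟩
    · intro a b hab
      have := congrFun hab 0
      simpa [Fin.ext_iff] using this
    · intro i
      refine Set.mem_iUnion.2 ⟨(i : ℕ), by simp, ?_⟩
      intro k
      show (if k + 1 = 0 then (i : ℕ) else 0) ≤ (if k + 2 = 0 then (i : ℕ) else 0) ∧
        (if k + 1 = 0 then (i : ℕ) else 0) < m - p
      rw [if_neg (by omega), if_neg (by omega)]
      omega
end
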